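/- GR(1) satisfaction is invariant under removal of events not occurring in the formula: let φ = ⋀_{i≤n}□◇φᵢ ⟹ ⋀_{j≤m}□◇γⱼ be a GR(1) formula over Σ whose atomic events all lie in Σ∖L, and such that each φᵢ and each γⱼ evaluates to false when all of its atomic events are false. Let π ∈ Σ^ω be an infinite trace such that the projection π′ = P_{Σ∖L}(π), obtained by erasing from π all events in L, is infinite. Then π ⊨ φ if and only if π′ ⊨ φ. -/

import Mathlib

namespace CompSynth

/-- A labelled transition system over event labels `E`. -/
structure LTS (E : Type) where
  State : Type
  finState : Finite State
  alph : Finset E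
  trans : State → E → State → Prop
  init : State

namespace LTS

variable {E : Type} [DecidableEq E]

/-- Parallel composition of two LTSs. -/
def par (M N : LTS E) : LTS E where
  State := M.State × N.State
  finState := by haveI := M.finState; haveI := N.finState; exact inferInstance
  alph := M.alph ∪ N.alph
  trans := fun s l t =>
    (M.trans s.1 l t.1 ∧ l ∈ M.alph ∧ l ∉ N.alph ∧ t.2 = s.2) ∨
    (N.trans s.2 l t.2 ∧ l ∈ N.alph ∧ l ∉ M.alph ∧ t.1 = s.1) ∨
    (M.trans s.1 l t.1 ∧ N.trans s.2 l t.2 ∧ l ∈ M.alph ∧ l ∈ N.alph)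
  init := (M.init, N.init)

/-- The trivial (one-state, empty-alphabet) LTS. -/
def unitLTS : LTS E where
  State := Unit
  finState := inferInstance
  alph := ∅
  trans := fun _ _ _ => False
  init := ()

/-- Parallel composition of a finite list of LTSs. -/
def parList : List (LTS E) → LTS E
  | [] => unitLTS
  | [M] => M
  | M :: Ms => M.par (parList Ms)

/-- Reachable states of an LTS. -/
inductive Reach (M : LTS E) : M.State → Prop
  | init : Reach M M.init
  | step {s l t} : Reach M s → M.trans s l t → Reach M t

/-- Finite runs (paths) between states, labelled by a word. -/
inductive Path (M : LTS E) : M.State → List E → M.State → Prop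
  | nil (s : M.State) : Path M s [] s
  | cons {s t u : M.State} {l : E} {w : List E} :
      M.trans s l t → Path M t w u → Path M s (l :: w) u

/-- Finite traces of an LTS. -/
def FinTr (M : LTS E) (w : List E) : Prop := ∃ s, Path M M.init w s

/-- Infinite traces of an LTS. -/
def InfTr (M : LTS E) (π : ℕ → E) : Prop :=
  ∃ ρ : ℕ → M.State, ρ 0 = M.init ∧ ∀ i, M.trans (ρ i) (π i) (ρ (i + 1))

/-- No state has two outgoing transitions with the same label. -/
def Deterministic (M : LTS E) : Prop :=
  ∀ s l t t', M.trans s l t → M.trans s l t' → t = t'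

/-- Every reachable state has an outgoing transition. -/
def DeadlockFree (M : LTS E) : Prop :=
  ∀ s, Reach M s → ∃ l t, M.trans s l t

/-- `C` is legal for `M` w.r.t. the uncontrollable events `Eu`. -/
def Legal (M C : LTS E) (Eu : Finset E) : Prop :=
  ∀ p : (M.par C).State, Reach (M.par C) p → ∀ l ∈ Eu,
    ((∃ q, (M.par C).trans p l q) ↔ (∃ t, M.trans p.1 l t))

/-- Restriction of an LTS to a set of states containing the initial state. -/
def restrict (M : LTS E) (S' : Set M.State) (h : M.init ∈ S') : LTS E where
  State := {s // s ∈ S'}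
  finState := by haveI := M.finState; exact inferInstance
  alph := M.alph
  trans := fun x l y => M.trans x.1 l y.1
  init := ⟨M.init, h⟩

/-- The controlled subplant of `M` by the safe controller `restrict M S' h`
with respect to the uncontrolled shared events `Ω`: transitions of the safe
controller together with transitions to a fresh deadlock state `⊥` (here `none`)
on events of `Ω` enabled in `M` but removed by the safe controller. -/
def ctrlSub (M : LTS E) (S' : Set M.State) (h : M.init ∈ S') (Ω : Finset E) : LTS E where
  State := Option {s // s ∈ S'}
  finState := by
    haveI := M.finState
    haveI := Fintype.ofFinite M.State
    haveI : Finite {s // s ∈ S'} := inferInstance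
    haveI := Fintype.ofFinite {s // s ∈ S'}
    exact inferInstance
  alph := M.alph
  trans := fun x l y =>
    match x, y with
    | some a, some b => M.trans a.1 l b.1
    | some a, none =>
        l ∈ Ω ∧ (∃ t, M.trans a.1 l t) ∧ ∀ t, t ∈ S' → ¬ M.trans a.1 l t
    | none, _ => False
  init := some ⟨M.init, h⟩

/-- Quotient LTS by a relation on states. -/
def quot (M : LTS E) (r : M.State → M.State → Prop) : LTS E where
  State := Quot r
  finState := by
    haveI := M.finState
    exact Finite.of_surjective (Quot.mk r) (fun q => Quot.exists_rep q)
  alph := M.alph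
  trans := fun qs l qt => ∃ s t, M.trans s l t ∧ Quot.mk r s = qs ∧ Quot.mk r t = qt
  init := Quot.mk r M.init

/-- Removal of self-loop transitions labelled by events in `μs`. -/
def rmLoops (P : LTS E) (μs : Finset E) : LTS E :=
  { P with trans := fun s l t => P.trans s l t ∧ ¬(l ∈ μs ∧ t = s) }

/-- Synthesis observational equivalence on `M` w.r.t. local events `Υ`,
with controllable events `Ec` (uncontrollable events are those not in `Ec`). -/
def IsSOE (M : LTS E) (Ec Υ : Finset E) (r : M.State → M.State → Prop) : Prop :=
  Equivalence r ∧
  (∀ x₁ x₂ y₁ u, r x₁ x₂ → u ∈ M.alph → u ∉ Ec → M.trans x₁ u y₁ →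
    ∃ (π₁ π₂ : List E) (y₂ : M.State),
      (∀ l ∈ π₁, l ∈ Υ ∧ l ∉ Ec) ∧ (∀ l ∈ π₂, l ∈ Υ ∧ l ∉ Ec) ∧
      Path M x₂ (π₁ ++ (if u ∈ Υ then [] else [u]) ++ π₂) y₂ ∧ r y₁ y₂) ∧
  (∀ x₁ x₂ y₁ c, r x₁ x₂ → c ∈ Ec → M.trans x₁ c y₁ →
    ∃ (n : ℕ) (xs : Fin (n + 1) → M.State) (τ : Fin n → E) (y₂ : M.State),
      xs 0 = x₂ ∧
      (∀ i : Fin n, M.trans (xs i.castSucc) (τ i) (xs i.succ) ∧ τ i ∈ Υ ∧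
        (τ i ∈ Ec → r x₁ (xs i.succ))) ∧
      (if c ∈ Υ then y₂ = xs (Fin.last n) else M.trans (xs (Fin.last n)) c y₂) ∧
      r y₁ y₂)

/-- `l` is a self-loop event added by the `r`-reduction of `M`. -/
def SelfLoopAdded (M : LTS E) (r : M.State → M.State → Prop) (l : E) : Prop :=
  ∃ s t, M.trans s l t ∧ r s t ∧ s ≠ t

end LTS

/-- Syntax of LTL formulas over atomic events in `E`. -/
inductive LTL (E : Type) where
  | tru : LTL E
  | atom : E → LTL E
  | neg : LTL E → LTL E
  | orf : LTL E → LTL E → LTL E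
  | next : LTL E → LTL E
  | untl : LTL E → LTL E → LTL E

namespace LTL

variable {E : Type}

/-- Satisfaction of an LTL formula by an infinite trace at a position. -/
def satAt (π : ℕ → E) : LTL E → ℕ → Prop
  | tru, _ => True
  | atom e, i => π i = e
  | neg φ, i => ¬ satAt π φ i
  | orf φ ψ, i => satAt π φ i ∨ satAt π ψ i
  | next φ, i => satAt π φ (i + 1)
  | untl φ ψ, i => ∃ k, i ≤ k ∧ satAt π ψ k ∧ ∀ j, i ≤ j → j < k → satAt π φ j

/-- Satisfaction of an LTL formula by an infinite trace. -/
def sat (π : ℕ → E) (φ : LTL E) : Prop := satAt π φ 0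

def fls : LTL E := neg tru
def andf (φ ψ : LTL E) : LTL E := neg (orf (neg φ) (neg ψ))
def imp (φ ψ : LTL E) : LTL E := orf (neg φ) ψ
def ev (φ : LTL E) : LTL E := untl tru φ
def alw (φ : LTL E) : LTL E := neg (ev (neg φ))
def alwEv (φ : LTL E) : LTL E := alw (ev φ)
def conjList (l : List (LTL E)) : LTL E := l.foldr andf tru
def disjList (l : List (LTL E)) : LTL E := l.foldr orf fls

/-- The atomic events occurring in a formula. -/
def events [DecidableEq E] : LTL E → Finset E
  | tru => ∅
  | atom e => {e}
  | neg φ => events φ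
  | orf φ ψ => events φ ∪ events ψ
  | next φ => events φ
  | untl φ ψ => events φ ∪ events ψ

/-- Boolean combinations of atomic events (no temporal operators). -/
def isBool : LTL E → Prop
  | tru => True
  | atom _ => True
  | neg φ => isBool φ
  | orf φ ψ => isBool φ ∧ isBool ψ
  | next _ => False
  | untl _ _ => False

end LTL

variable {E : Type} [DecidableEq E]

/-- The GR(1) formula `⋀ □◇aᵢ ⟹ ⋀ □◇gⱼ`. -/
def GR1 (As Gs : List (LTL E)) : LTL E :=
  LTL.imp (LTL.conjList (As.map LTL.alwEv)) (LTL.conjList (Gs.map LTL.alwEv))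

/-- The boolean formula `⋀_{l ∈ μ} ¬l`. -/
noncomputable def finsetNegConj (μ : Finset E) : LTL E :=
  LTL.conjList (μ.toList.map fun l => LTL.neg (LTL.atom l))

/-- The formula `□◇(⋀_{l ∈ μ} ¬l) ⟹ φ`. -/
noncomputable def muGoal (μ : Finset E) (φ : LTL E) : LTL E :=
  LTL.imp (LTL.alwEv (finsetNegConj μ)) φ

open LTS

/-- `C` is a solution of the control problem `⟨P, Ec, φ⟩`. -/
def Solution (P : LTS E) (Ec : Finset E) (φ : LTL E) (C : LTS E) : Prop :=
  Deterministic C ∧ Legal P C (P.alph \ Ec) ∧ DeadlockFree (P.par C) ∧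
  ∀ π : ℕ → E, InfTr (P.par C) π → LTL.sat π φ

/-- `s` is a winning state of the control problem `⟨P, Ec, φ⟩`. -/
def Winning (P : LTS E) (Ec : Finset E) (φ : LTL E) (s : P.State) : Prop :=
  ∃ C : LTS E, Solution P Ec φ C ∧ ∃ c : C.State, Reach (C.par P) (c, s)

/-- Controllers of the synthesis tuple `(Ms, Cs, μ)`. -/
def Cont (Ec : Finset E) (φ : LTL E) (Ms Cs : List (LTS E)) (μ : Finset E) :
    Set (LTS E) :=
  { X | ∃ CM : LTS E, Solution (parList Ms) Ec (muGoal μ φ) CM ∧ X = parList (CM :: Cs) }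

/-!
A boolean formula is evaluated on the current event alone, and by the hypotheses it can
only hold at an event of the formula, hence at a position kept by the projection `f`. So each
`□◇b` holds on `π` iff it holds on `π ∘ f`: a strictly monotone reindexing hits infinitely
many of these positions exactly when there are infinitely many of them.
-/

open Filter

theorem _root_.Filter.frequently_comp_iff_of_strictMono {f : ℕ → ℕ} (hf : StrictMono f)
    {p : ℕ → Prop} (hp : ∀ m, p m → m ∈ Set.range f) :
    (∃ᶠ k in atTop, p (f k)) ↔ ∃ᶠ m in atTop, p m := by
  refine ⟨hf.tendsto_atTop.frequently, fun h => frequently_atTop.2 fun K => ?_⟩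
  obtain ⟨m, hKm, hm⟩ := frequently_atTop.1 h (f K)
  obtain ⟨k, rfl⟩ := hp m hm
  exact ⟨k, hf.le_iff_le.1 hKm, hm⟩

namespace LTL

variable {E : Type}

theorem isBool.satAt_congr {b : LTL E} (hb : b.isBool) {σ σ' : ℕ → E} {i j : ℕ}
    (h : σ i = σ' j) : satAt σ b i ↔ satAt σ' b j := by
  induction b with
  | tru => rfl
  | atom e => simp only [satAt, h]
  | neg φ ih => exact not_congr (ih hb)
  | orf φ ψ ih₁ ih₂ => exact or_congr (ih₁ hb.1) (ih₂ hb.2)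
  | next φ => exact hb.elim
  | untl φ ψ => exact hb.elim

theorem satAt_alwEv (σ : ℕ → E) (b : LTL E) (i : ℕ) :
    satAt σ (alwEv b) i ↔ ∃ᶠ m in atTop, satAt σ b m := by
  simp only [alwEv, alw, ev, satAt, frequently_atTop, implies_true, and_true]
  constructor
  · intro h k
    by_contra! hc
    exact h ⟨max i k, le_max_left _ _, fun ⟨m, hm, hsat⟩ => hc m (le_of_max_le_right hm) hsat⟩
  · rintro h ⟨k, -, hk⟩
    exact hk (h k)

theorem satAt_conjList (σ : ℕ → E) (l : List (LTL E)) (i : ℕ) :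
    satAt σ (conjList l) i ↔ ∀ φ ∈ l, satAt σ φ i := by
  induction l with
  | nil => simp [conjList, satAt]
  | cons a l ih =>
    simp only [conjList, List.foldr, andf, satAt] at ih ⊢
    rw [not_or, not_not, not_not, ih, List.forall_mem_cons]

theorem satAt_alwEv_comp_iff {b : LTL E} (hb : b.isBool) {π : ℕ → E} {f : ℕ → ℕ}
    (hf : StrictMono f) (hkept : ∀ m, satAt π b m → m ∈ Set.range f) (i j : ℕ) :
    satAt (π ∘ f) (alwEv b) i ↔ satAt π (alwEv b) j := by
  rw [satAt_alwEv, satAt_alwEv, ← frequently_comp_iff_of_strictMono hf hkept]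
  exact frequently_congr (Eventually.of_forall fun k => hb.satAt_congr rfl)

theorem satAt_conjList_map_alwEv_comp_iff {l : List (LTL E)} {π : ℕ → E} {f : ℕ → ℕ}
    (hf : StrictMono f) (hl : ∀ b ∈ l, b.isBool ∧ ∀ m, satAt π b m → m ∈ Set.range f)
    (i j : ℕ) :
    satAt (π ∘ f) (conjList (l.map alwEv)) i ↔ satAt π (conjList (l.map alwEv)) j := by
  simp only [satAt_conjList, List.forall_mem_map]
  exact forall₂_congr fun b hb => satAt_alwEv_comp_iff (hl b hb).1 hf (hl b hb).2 i j

theorem mem_range_of_satAt [DecidableEq E] {b : LTL E} {L : Finset E}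
    (hev : ∀ e ∈ b.events, e ∉ L)
    (hfls : ∀ (σ : ℕ → E) (i : ℕ), (∀ e ∈ b.events, σ i ≠ e) → ¬ satAt σ b i)
    {π : ℕ → E} {f : ℕ → ℕ} (hran : ∀ i, (π i ∉ L ↔ ∃ k, f k = i)) {m : ℕ}
    (hm : satAt π b m) : m ∈ Set.range f :=
  (hran m).1 fun hmL => hfls π m (fun e he hme => hev e he (hme ▸ hmL)) hm

end LTL

theorem gr1_projection_invariance_general
    (SS L : Finset E)
    (As Gs : List (LTL E))
    (hAs : ∀ b ∈ As, b.isBool ∧ (∀ e ∈ b.events, e ∈ SS ∧ e ∉ L) ∧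
      (∀ (σ : ℕ → E) (i : ℕ), (∀ e ∈ b.events, σ i ≠ e) → ¬ LTL.satAt σ b i))
    (hGs : ∀ b ∈ Gs, b.isBool ∧ (∀ e ∈ b.events, e ∈ SS ∧ e ∉ L) ∧
      (∀ (σ : ℕ → E) (i : ℕ), (∀ e ∈ b.events, σ i ≠ e) → ¬ LTL.satAt σ b i))
    (π : ℕ → E)
    (f : ℕ → ℕ) (hf : StrictMono f)
    (hran : ∀ i, (π i ∉ L ↔ ∃ k, f k = i)) :
    LTL.sat π (GR1 As Gs) ↔ LTL.sat (fun k => π (f k)) (GR1 As Gs) := by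
  have hkept : ∀ l : List (LTL E), (∀ b ∈ l, b.isBool ∧ (∀ e ∈ b.events, e ∈ SS ∧ e ∉ L) ∧
      (∀ (σ : ℕ → E) (i : ℕ), (∀ e ∈ b.events, σ i ≠ e) → ¬ LTL.satAt σ b i)) →
      ∀ b ∈ l, b.isBool ∧ ∀ m, LTL.satAt π b m → m ∈ Set.range f :=
    fun l hl b hb => ⟨(hl b hb).1, fun _ =>
      LTL.mem_range_of_satAt (fun e he => ((hl b hb).2.1 e he).2) (hl b hb).2.2 hran⟩
  have hA := LTL.satAt_conjList_map_alwEv_comp_iff hf (hkept As hAs) 0 0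
  have hG := LTL.satAt_conjList_map_alwEv_comp_iff hf (hkept Gs hGs) 0 0
  exact or_congr (not_congr hA.symm) hG.symm

/-- GR(1) satisfaction is invariant under removal (stuttering) of events
not occurring in the formula, provided the projected trace is infinite. -/
theorem gr1_projection_invariance
    (SS L : Finset E) (hL : L ⊆ SS)
    (As Gs : List (LTL E))
    (hAs : ∀ b ∈ As, b.isBool ∧ (∀ e ∈ b.events, e ∈ SS ∧ e ∉ L) ∧
      (∀ (σ : ℕ → E) (i : ℕ), (∀ e ∈ b.events, σ i ≠ e) → ¬ LTL.satAt σ b i))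
    (hGs : ∀ b ∈ Gs, b.isBool ∧ (∀ e ∈ b.events, e ∈ SS ∧ e ∉ L) ∧
      (∀ (σ : ℕ → E) (i : ℕ), (∀ e ∈ b.events, σ i ≠ e) → ¬ LTL.satAt σ b i))
    (π : ℕ → E) (hπ : ∀ i, π i ∈ SS)
    (f : ℕ → ℕ) (hf : StrictMono f)
    (hran : ∀ i, (π i ∉ L ↔ ∃ k, f k = i)) :
    LTL.sat π (GR1 As Gs) ↔ LTL.sat (fun k => π (f k)) (GR1 As Gs) :=
  gr1_projection_invariance_general SS L As Gs hAs hGs π f hf hran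

end CompSynth
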